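/- arXiv:1803.02146 — 2 statements merged into one kernel-verified Lean document; each statement's English description precedes it below -/
import Mathlib

section
/- Let n ≥ 1 and let α, β ∈ CP_n. Then α ℒ β in CP_n (i.e., α = β or α = γ₁β for some γ₁ ∈ CP_n, and β = α or β = γ₂α for some γ₂ ∈ CP_n) if and only if there exist: an equivalence relation ρ_α on dom α refining ker α (a ρ_α a′ implies aα = a′α) together with a set T ⊆ dom α meeting each ρ_α-class exactly once and satisfying |t − t′| ≤ |a − a′| whenever t, t′ ∈ T, a ρ_α t and a′ ρ_α t′; an equivalence relation ρ_β on dom β refining ker β together with a set S ⊆ dom β meeting each ρ_β-class exactly once and satisfying the analogous inequality; and an integer e such that either S = {t + e : t ∈ T} and tα = (t + e)β for every t ∈ T, or S = {e − t : t ∈ T} and tα = (e − t)β for every t ∈ T. -/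
/-- A partial transformation of the chain `[n] = {1, …, n}`: a function defined on a
subset `dom ⊆ {1, …, n}` with values in `{1, …, n}` (junk value `0` outside the domain,
so that equality of partial transformations is equality of domains and of values on
the domain). -/
structure PT (n : ℕ) where
  dom : Finset ℕ
  toFun : ℕ → ℕ
  dom_subset : dom ⊆ Finset.Icc 1 n
  maps_to : ∀ x ∈ dom, toFun x ∈ Finset.Icc 1 n
  zero_outside : ∀ x ∉ dom, toFun x = 0

namespace PT

/-- Left-to-right composition `αβ`: apply `α` first, then `β`.
`dom (αβ) = {x ∈ dom α : xα ∈ dom β}` and `x(αβ) = (xα)β`. -/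
def comp {n : ℕ} (α β : PT n) : PT n where
  dom := α.dom.filter (fun x => α.toFun x ∈ β.dom)
  toFun := fun x => if x ∈ α.dom ∧ α.toFun x ∈ β.dom then β.toFun (α.toFun x) else 0
  dom_subset := fun x hx => α.dom_subset (Finset.mem_filter.mp hx).1
  maps_to := by
    intro x hx
    rw [Finset.mem_filter] at hx
    rw [if_pos ⟨hx.1, hx.2⟩]
    exact β.maps_to _ hx.2
  zero_outside := by
    intro x hx
    rw [Finset.mem_filter] at hx
    push_neg at hx
    rw [if_neg]
    rintro ⟨h1, h2⟩
    exact absurd h2 (hx h1)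

/-- `α` is a contraction: `|xα − yα| ≤ |x − y|` for all `x, y ∈ dom α`. -/
def IsContraction {n : ℕ} (α : PT n) : Prop :=
  ∀ x ∈ α.dom, ∀ y ∈ α.dom,
    |(α.toFun x : ℤ) - (α.toFun y : ℤ)| ≤ |(x : ℤ) - (y : ℤ)|

/-- The image `im α = {xα : x ∈ dom α}`. -/
def im {n : ℕ} (α : PT n) : Finset ℕ := α.dom.image α.toFun

/-- `T` is a transversal of the kernel partition `Ker α`: it is contained in `dom α`
and contains exactly one element of each kernel class. -/
def IsTransversal {n : ℕ} (α : PT n) (T : Finset ℕ) : Prop :=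
  T ⊆ α.dom ∧ ∀ a ∈ α.dom, ∃! t, t ∈ T ∧ α.toFun t = α.toFun a

/-- `T` is an admissible transversal of `Ker α`: a transversal such that
`|t − t′| ≤ |a − a′|` whenever `a` is in the kernel class of `t` and `a′` in that
of `t′`. -/
def IsAdmissible {n : ℕ} (α : PT n) (T : Finset ℕ) : Prop :=
  IsTransversal α T ∧
    ∀ t ∈ T, ∀ t' ∈ T, ∀ a ∈ α.dom, ∀ a' ∈ α.dom,
      α.toFun a = α.toFun t → α.toFun a' = α.toFun t' →
        |(t : ℤ) - (t' : ℤ)| ≤ |(a : ℤ) - (a' : ℤ)|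

end PT

/-- Green's `ℒ`-relation in the semigroup `CP n` of partial contractions:
`α ℒ β` iff `(CP n)¹ α = (CP n)¹ β`. -/
def GreenL {n : ℕ} (α β : PT n) : Prop :=
  (α = β ∨ ∃ γ : PT n, PT.IsContraction γ ∧ α = γ.comp β) ∧
  (β = α ∨ ∃ γ : PT n, PT.IsContraction γ ∧ β = γ.comp α)

/-- `r` is an equivalence relation on `dom α` refining `ker α`, and `T` is an
admissible transversal for `r`: `T` meets each `r`-class exactly once and
`|t − t′| ≤ |a − a′|` whenever `a r t` and `a′ r t′`. -/
def AdmissibleRefinement {n : ℕ} (α : PT n) (r : ℕ → ℕ → Prop) (T : Finset ℕ) : Prop :=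
  (∀ a b, r a b → a ∈ α.dom ∧ b ∈ α.dom) ∧
  (∀ a ∈ α.dom, r a a) ∧
  (∀ a b, r a b → r b a) ∧
  (∀ a b c, r a b → r b c → r a c) ∧
  (∀ a b, r a b → α.toFun a = α.toFun b) ∧
  T ⊆ α.dom ∧
  (∀ a ∈ α.dom, ∃! t, t ∈ T ∧ r a t) ∧
  (∀ t ∈ T, ∀ t' ∈ T, ∀ a a', r a t → r a' t' →
    |(t : ℤ) - (t' : ℤ)| ≤ |(a : ℤ) - (a' : ℤ)|)



lemma exists_idem_iter (A : Finset ℕ) (h : ℕ → ℕ) (hA : ∀ a ∈ A, h a ∈ A) :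
    ∃ N, 0 < N ∧ ∀ a ∈ A, h^[N] (h^[N] a) = h^[N] a := by
  classical
  set H : {x // x ∈ A} → {x // x ∈ A} := fun x => ⟨h x.1, hA x.1 x.2⟩ with hH
  have key : ∀ (k : ℕ) (a : ℕ) (ha : a ∈ A), (H^[k] ⟨a, ha⟩).1 = h^[k] a := by
    intro k
    induction k with
    | zero => intro a ha; simp
    | succ k ih =>
      intro a ha
      rw [Function.iterate_succ_apply, Function.iterate_succ_apply]
      exact ih (h a) (hA a ha)
  have main : ∀ i j : ℕ, i < j → H^[i] = H^[j] →
      ∃ N, 0 < N ∧ H^[N] ∘ H^[N] = H^[N] := by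
    intro i j hlt hij
    have hd : 0 < j - i := Nat.sub_pos_of_lt hlt
    have step : ∀ m, i ≤ m → H^[m + (j - i)] = H^[m] := by
      intro m hm
      have hm' : m = (m - i) + i := (Nat.sub_add_cancel hm).symm
      have h1 : m + (j - i) = (m - i) + j := by omega
      rw [h1, Function.iterate_add, ← hij, ← Function.iterate_add, ← hm']
    have step2 : ∀ k m, i ≤ m → H^[m + k * (j - i)] = H^[m] := by
      intro k
      induction k with
      | zero => intro m hm; simp
      | succ k ih =>
        intro m hm
        have h1 : m + (k + 1) * (j - i) = (m + (j - i)) + k * (j - i) := by ring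
        rw [h1, ih _ (le_trans hm (Nat.le_add_right _ _)), step m hm]
    refine ⟨(i + 1) * (j - i), by positivity, ?_⟩
    funext x
    have h2 : H^[(i+1)*(j-i) + (i+1)*(j-i)] = H^[(i+1)*(j-i)] := by
      apply step2
      calc i ≤ (i+1) * 1 := by omega
      _ ≤ (i+1)*(j-i) := Nat.mul_le_mul_left _ hd
    calc (H^[(i+1)*(j-i)] ∘ H^[(i+1)*(j-i)]) x = H^[(i+1)*(j-i) + (i+1)*(j-i)] x := by
          rw [Function.iterate_add]
      _ = H^[(i+1)*(j-i)] x := by rw [h2]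
  obtain ⟨i, j, hne, hij⟩ := Finite.exists_ne_map_eq_of_infinite (fun k : ℕ => H^[k])
  have hex : ∃ N, 0 < N ∧ H^[N] ∘ H^[N] = H^[N] := by
    rcases lt_or_gt_of_ne hne with hlt | hlt
    · exact main i j hlt hij
    · exact main j i hlt hij.symm
  obtain ⟨N, hN, hidem⟩ := hex
  refine ⟨N, hN, ?_⟩
  intro a ha
  have hb := key N a ha
  set b := H^[N] ⟨a, ha⟩ with hbdef
  have : h^[N] (h^[N] a) = (H^[N] b).1 := by rw [← hb]; exact (key N b.1 b.2).symm
  rw [this]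
  have : H^[N] b = b := congrFun hidem ⟨a, ha⟩
  rw [this, hb]


lemma abs_eq_abs_cases (x y : ℤ) (h : |x| = |y|) : x = y ∨ x = -y := by
  rcases abs_cases x with ⟨h1, _⟩ | ⟨h1, _⟩ <;> rcases abs_cases y with ⟨h2, _⟩ | ⟨h2, _⟩ <;> omega

lemma exists_affine (T : Finset ℕ) (F : ℕ → ℕ)
    (hiso : ∀ t ∈ T, ∀ t' ∈ T, |(F t : ℤ) - (F t' : ℤ)| = |(t : ℤ) - (t' : ℤ)|) :
    ∃ e : ℤ, (∀ t ∈ T, (F t : ℤ) = (t : ℤ) + e) ∨ (∀ t ∈ T, (F t : ℤ) = e - (t : ℤ)) := by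
  rcases T.eq_empty_or_nonempty with hT | hT
  · exact ⟨0, Or.inl (by simp [hT])⟩
  set t₀ := T.min' hT with ht₀
  set t₁ := T.max' hT with ht₁
  have hm0 : t₀ ∈ T := T.min'_mem hT
  have hm1 : t₁ ∈ T := T.max'_mem hT
  have h01 := abs_eq_abs_cases _ _ (hiso t₁ hm1 t₀ hm0)
  have hle : t₀ ≤ t₁ := T.min'_le _ hm1
  rcases h01 with hA | hB
  · refine ⟨(F t₀ : ℤ) - (t₀ : ℤ), Or.inl ?_⟩
    intro t ht
    have hlo : t₀ ≤ t := T.min'_le _ ht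
    have hhi : t ≤ t₁ := T.le_max' _ ht
    have d1 := abs_eq_abs_cases _ _ (hiso t ht t₀ hm0)
    have d2 := abs_eq_abs_cases _ _ (hiso t₁ hm1 t ht)
    omega
  · refine ⟨(F t₀ : ℤ) + (t₀ : ℤ), Or.inr ?_⟩
    intro t ht
    have hlo : t₀ ≤ t := T.min'_le _ ht
    have hhi : t ≤ t₁ := T.le_max' _ ht
    have d1 := abs_eq_abs_cases _ _ (hiso t ht t₀ hm0)
    have d2 := abs_eq_abs_cases _ _ (hiso t₁ hm1 t ht)
    omega


lemma iter_mem (A : Finset ℕ) (h : ℕ → ℕ) (hA : ∀ a ∈ A, h a ∈ A) (k : ℕ) :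
    ∀ a ∈ A, h^[k] a ∈ A := by
  induction k with
  | zero => intro a ha; simpa using ha
  | succ k ih =>
    intro a ha
    rw [Function.iterate_succ_apply]
    exact ih _ (hA a ha)

lemma iter_val (A : Finset ℕ) (h v : ℕ → ℕ) (hA : ∀ a ∈ A, h a ∈ A)
    (hv : ∀ a ∈ A, v (h a) = v a) (k : ℕ) : ∀ a ∈ A, v (h^[k] a) = v a := by
  induction k with
  | zero => intro a ha; simp
  | succ k ih =>
    intro a ha
    rw [Function.iterate_succ_apply]
    rw [ih _ (hA a ha), hv a ha]

lemma iter_contr (A : Finset ℕ) (h : ℕ → ℕ) (hA : ∀ a ∈ A, h a ∈ A)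
    (hc : ∀ a ∈ A, ∀ a' ∈ A, |(h a : ℤ) - (h a' : ℤ)| ≤ |(a : ℤ) - (a' : ℤ)|) (k : ℕ) :
    ∀ a ∈ A, ∀ a' ∈ A, |(h^[k] a : ℤ) - (h^[k] a' : ℤ)| ≤ |(a : ℤ) - (a' : ℤ)| := by
  induction k with
  | zero => intro a _ a' _; simp
  | succ k ih =>
    intro a ha a' ha'
    rw [Function.iterate_succ_apply, Function.iterate_succ_apply]
    exact le_trans (ih _ (hA a ha) _ (hA a' ha')) (hc a ha a' ha')

lemma iter_mul (A : Finset ℕ) (h : ℕ → ℕ) (hA : ∀ a ∈ A, h a ∈ A) (m k : ℕ)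
    (hm : ∀ a ∈ A, h^[m] (h^[m] a) = h^[m] a) (hk : 0 < k) :
    ∀ a ∈ A, h^[k * m] a = h^[m] a := by
  induction k with
  | zero => omega
  | succ k ih =>
    intro a ha
    rcases Nat.eq_zero_or_pos k with hk0 | hk0
    · subst hk0; simp
    · have : (k + 1) * m = m + k * m := by ring
      rw [this, Function.iterate_add_apply, ih hk0 _ ha]; exact hm a ha

lemma comm_iter (f g : ℕ → ℕ) (k : ℕ) (x : ℕ) :
    f ((fun y => g (f y))^[k] x) = (fun y => f (g y))^[k] (f x) := by
  induction k generalizing x with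
  | zero => simp
  | succ k ih =>
    rw [Function.iterate_succ_apply, Function.iterate_succ_apply]
    exact ih (g (f x))

lemma iter_decomp (f g : ℕ → ℕ) (k : ℕ) (x : ℕ) :
    (fun y => g (f y))^[k + 1] x = g ((fun y => f (g y))^[k] (f x)) := by
  rw [Function.iterate_succ_apply]
  induction k generalizing x with
  | zero => simp
  | succ k ih =>
    rw [Function.iterate_succ_apply, Function.iterate_succ_apply]
    exact ih (g (f x))

lemma PT.ext' {n : ℕ} {α β : PT n} (h1 : α.dom = β.dom)
    (h2 : ∀ x, α.toFun x = β.toFun x) : α = β := by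
  cases α; cases β
  simp only [PT.mk.injEq]
  exact ⟨h1, funext h2⟩

lemma factor_exists {n : ℕ} (α β : PT n) (r : ℕ → ℕ → Prop) (T : Finset ℕ)
    (hr : AdmissibleRefinement α r T) (G : ℕ → ℕ)
    (hGdom : ∀ t ∈ T, G t ∈ β.dom)
    (hGval : ∀ t ∈ T, α.toFun t = β.toFun (G t))
    (hGiso : ∀ t ∈ T, ∀ t' ∈ T, |(G t : ℤ) - (G t' : ℤ)| = |(t : ℤ) - (t' : ℤ)|) :
    ∃ γ : PT n, PT.IsContraction γ ∧ α = γ.comp β := by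
  classical
  obtain ⟨hr1, hr2, hr3, hr4, hr5, hr6, hr7, hr8⟩ := hr
  have hrepex : ∀ a : ℕ, ∃ t, a ∈ α.dom → (t ∈ T ∧ r a t) := by
    intro a
    by_cases ha : a ∈ α.dom
    · obtain ⟨t, ht, -⟩ := hr7 a ha
      exact ⟨t, fun _ => ht⟩
    · exact ⟨0, fun h => absurd h ha⟩
  choose rep hrep using hrepex
  set γ : PT n := {
    dom := α.dom
    toFun := fun x => if x ∈ α.dom then G (rep x) else 0
    dom_subset := α.dom_subset
    maps_to := by
      intro x hx
      simp only [if_pos hx]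
      exact β.dom_subset (hGdom _ (hrep x hx).1)
    zero_outside := by intro x hx; simp only [if_neg hx] } with hγ
  have hγc : PT.IsContraction γ := by
    intro x hx y hy
    have hx' : x ∈ α.dom := hx
    have hy' : y ∈ α.dom := hy
    show |(↑(if x ∈ α.dom then G (rep x) else 0) : ℤ) - ↑(if y ∈ α.dom then G (rep y) else 0)| ≤ _
    rw [if_pos hx', if_pos hy']
    rw [hGiso _ (hrep x hx').1 _ (hrep y hy').1]
    exact hr8 _ (hrep x hx').1 _ (hrep y hy').1 x y (hrep x hx').2 (hrep y hy').2
  refine ⟨γ, hγc, PT.ext' ?_ ?_⟩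
  · show α.dom = γ.dom.filter (fun x => γ.toFun x ∈ β.dom)
    ext x
    simp only [Finset.mem_filter]
    constructor
    · intro hx
      refine ⟨hx, ?_⟩
      show (if x ∈ α.dom then G (rep x) else 0) ∈ β.dom
      rw [if_pos hx]
      exact hGdom _ (hrep x hx).1
    · exact fun h => h.1
  · intro x
    show α.toFun x = if (x ∈ γ.dom ∧ γ.toFun x ∈ β.dom) then β.toFun (γ.toFun x) else 0
    by_cases hx : x ∈ α.dom
    · have hg : γ.toFun x = G (rep x) := by
        show (if x ∈ α.dom then G (rep x) else 0) = _
        rw [if_pos hx]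
      have hmem : γ.toFun x ∈ β.dom := by rw [hg]; exact hGdom _ (hrep x hx).1
      rw [if_pos ⟨hx, hmem⟩, hg]
      rw [← hGval _ (hrep x hx).1]
      exact hr5 x (rep x) (hrep x hx).2
    · rw [α.zero_outside x hx, if_neg]
      rintro ⟨h1, -⟩
      exact hx h1

lemma forward_main {n : ℕ} (α β γ₁ γ₂ : PT n)
    (hα : α = γ₁.comp β) (hβ : β = γ₂.comp α)
    (hc₁ : PT.IsContraction γ₁) (hc₂ : PT.IsContraction γ₂) :
    ∃ (r s : ℕ → ℕ → Prop) (T S : Finset ℕ) (e : ℤ),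
        AdmissibleRefinement α r T ∧ AdmissibleRefinement β s S ∧
        (((∀ t ∈ T, ∃ u ∈ S, (u : ℤ) = (t : ℤ) + e ∧ α.toFun t = β.toFun u) ∧
          (∀ u ∈ S, ∃ t ∈ T, (u : ℤ) = (t : ℤ) + e)) ∨
         ((∀ t ∈ T, ∃ u ∈ S, (u : ℤ) = e - (t : ℤ) ∧ α.toFun t = β.toFun u) ∧
          (∀ u ∈ S, ∃ t ∈ T, (u : ℤ) = e - (t : ℤ)))) := by
  classical
  set f := γ₁.toFun with hf
  set g := γ₂.toFun with hg
  have hfdom : ∀ a ∈ α.dom, a ∈ γ₁.dom ∧ f a ∈ β.dom := by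
    intro a ha
    rw [hα] at ha
    simpa only [PT.comp, Finset.mem_filter] using ha
  have hgdom : ∀ b ∈ β.dom, b ∈ γ₂.dom ∧ g b ∈ α.dom := by
    intro b hb
    rw [hβ] at hb
    simpa only [PT.comp, Finset.mem_filter] using hb
  have hfval : ∀ a ∈ α.dom, α.toFun a = β.toFun (f a) := by
    intro a ha
    obtain ⟨h1, h2⟩ := hfdom a ha
    conv_lhs => rw [hα]
    show (if a ∈ γ₁.dom ∧ γ₁.toFun a ∈ β.dom then β.toFun (γ₁.toFun a) else 0) = _
    rw [if_pos ⟨h1, h2⟩]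
  have hgval : ∀ b ∈ β.dom, β.toFun b = α.toFun (g b) := by
    intro b hb
    obtain ⟨h1, h2⟩ := hgdom b hb
    conv_lhs => rw [hβ]
    show (if b ∈ γ₂.dom ∧ γ₂.toFun b ∈ α.dom then α.toFun (γ₂.toFun b) else 0) = _
    rw [if_pos ⟨h1, h2⟩]
  have hfc : ∀ a ∈ α.dom, ∀ a' ∈ α.dom, |(f a : ℤ) - (f a' : ℤ)| ≤ |(a : ℤ) - (a' : ℤ)| :=
    fun a ha a' ha' => hc₁ a (hfdom a ha).1 a' (hfdom a' ha').1
  have hgc : ∀ b ∈ β.dom, ∀ b' ∈ β.dom, |(g b : ℤ) - (g b' : ℤ)| ≤ |(b : ℤ) - (b' : ℤ)| :=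
    fun b hb b' hb' => hc₂ b (hgdom b hb).1 b' (hgdom b' hb').1
  set φ : ℕ → ℕ := fun y => g (f y) with hφ
  set ψ : ℕ → ℕ := fun y => f (g y) with hψ
  have hφA : ∀ a ∈ α.dom, φ a ∈ α.dom := fun a ha => (hgdom _ (hfdom a ha).2).2
  have hψB : ∀ b ∈ β.dom, ψ b ∈ β.dom := fun b hb => (hfdom _ (hgdom b hb).2).2
  have hφval : ∀ a ∈ α.dom, α.toFun (φ a) = α.toFun a := by
    intro a ha
    rw [← hgval _ (hfdom a ha).2, ← hfval a ha]
  have hψval : ∀ b ∈ β.dom, β.toFun (ψ b) = β.toFun b := by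
    intro b hb
    rw [← hfval _ (hgdom b hb).2, ← hgval b hb]
  have hφc : ∀ a ∈ α.dom, ∀ a' ∈ α.dom, |(φ a : ℤ) - (φ a' : ℤ)| ≤ |(a : ℤ) - (a' : ℤ)| :=
    fun a ha a' ha' =>
      le_trans (hgc _ (hfdom a ha).2 _ (hfdom a' ha').2) (hfc a ha a' ha')
  have hψc : ∀ b ∈ β.dom, ∀ b' ∈ β.dom, |(ψ b : ℤ) - (ψ b' : ℤ)| ≤ |(b : ℤ) - (b' : ℤ)| :=
    fun b hb b' hb' =>
      le_trans (hfc _ (hgdom b hb).2 _ (hgdom b' hb').2) (hgc b hb b' hb')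
  obtain ⟨N₁, hN₁, hI₁⟩ := exists_idem_iter α.dom φ hφA
  obtain ⟨N₂, hN₂, hI₂⟩ := exists_idem_iter β.dom ψ hψB
  set K := N₁ * N₂ with hK
  have hKpos : 0 < K := Nat.mul_pos hN₁ hN₂
  have hKφ' : ∀ a ∈ α.dom, φ^[K] a = φ^[N₁] a := by
    intro a ha
    rw [hK, mul_comm]
    exact iter_mul α.dom φ hφA N₁ N₂ hI₁ hN₂ a ha
  have hKψ' : ∀ b ∈ β.dom, ψ^[K] b = ψ^[N₂] b := by
    intro b hb
    exact iter_mul β.dom ψ hψB N₂ N₁ hI₂ hN₁ b hb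
  have hKφ : ∀ a ∈ α.dom, φ^[K] (φ^[K] a) = φ^[K] a := by
    intro a ha
    rw [hKφ' a ha, hKφ' _ (iter_mem α.dom φ hφA N₁ a ha)]
    exact hI₁ a ha
  have hKψ : ∀ b ∈ β.dom, ψ^[K] (ψ^[K] b) = ψ^[K] b := by
    intro b hb
    rw [hKψ' b hb, hKψ' _ (iter_mem β.dom ψ hψB N₂ b hb)]
    exact hI₂ b hb
  set T := α.dom.image (φ^[K]) with hT
  set S := β.dom.image (ψ^[K]) with hS
  have hTA : T ⊆ α.dom := by
    intro t ht
    obtain ⟨a, ha, rfl⟩ := Finset.mem_image.mp ht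
    exact iter_mem α.dom φ hφA K a ha
  have hSB : S ⊆ β.dom := by
    intro u hu
    obtain ⟨b, hb, rfl⟩ := Finset.mem_image.mp hu
    exact iter_mem β.dom ψ hψB K b hb
  have hfixT : ∀ t ∈ T, φ^[K] t = t := by
    intro t ht
    obtain ⟨a, ha, rfl⟩ := Finset.mem_image.mp ht
    exact hKφ a ha
  have hfixS : ∀ u ∈ S, ψ^[K] u = u := by
    intro u hu
    obtain ⟨b, hb, rfl⟩ := Finset.mem_image.mp hu
    exact hKψ b hb
  have hvalKφ : ∀ a ∈ α.dom, α.toFun (φ^[K] a) = α.toFun a :=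
    iter_val α.dom φ α.toFun hφA hφval K
  have hvalKψ : ∀ b ∈ β.dom, β.toFun (ψ^[K] b) = β.toFun b :=
    iter_val β.dom ψ β.toFun hψB hψval K
  have hctrKφ := iter_contr α.dom φ hφA hφc K
  have hctrKψ := iter_contr β.dom ψ hψB hψc K
  set r : ℕ → ℕ → Prop := fun a b => a ∈ α.dom ∧ b ∈ α.dom ∧ φ^[K] a = φ^[K] b with hr
  set s : ℕ → ℕ → Prop := fun a b => a ∈ β.dom ∧ b ∈ β.dom ∧ ψ^[K] a = ψ^[K] b with hs
  have hrref : AdmissibleRefinement α r T := by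
    refine ⟨fun a b h => ⟨h.1, h.2.1⟩, fun a ha => ⟨ha, ha, rfl⟩,
      fun a b h => ⟨h.2.1, h.1, h.2.2.symm⟩,
      fun a b c h h' => ⟨h.1, h'.2.1, h.2.2.trans h'.2.2⟩,
      fun a b h => by rw [← hvalKφ a h.1, ← hvalKφ b h.2.1, h.2.2],
      hTA, ?_, ?_⟩
    · intro a ha
      refine ⟨φ^[K] a, ⟨Finset.mem_image_of_mem _ ha,
        ha, iter_mem α.dom φ hφA K a ha, (hKφ a ha).symm⟩, ?_⟩
      rintro y ⟨hyT, -, -, hy⟩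
      rw [← hfixT y hyT, ← hy]
    · intro t ht t' ht' a a' hat hat'
      have h1 : φ^[K] a = t := hat.2.2.trans (hfixT t ht)
      have h2 : φ^[K] a' = t' := hat'.2.2.trans (hfixT t' ht')
      rw [← h1, ← h2]
      exact hctrKφ a hat.1 a' hat'.1
  have hsref : AdmissibleRefinement β s S := by
    refine ⟨fun a b h => ⟨h.1, h.2.1⟩, fun a ha => ⟨ha, ha, rfl⟩,
      fun a b h => ⟨h.2.1, h.1, h.2.2.symm⟩,
      fun a b c h h' => ⟨h.1, h'.2.1, h.2.2.trans h'.2.2⟩,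
      fun a b h => by rw [← hvalKψ a h.1, ← hvalKψ b h.2.1, h.2.2],
      hSB, ?_, ?_⟩
    · intro b hb
      refine ⟨ψ^[K] b, ⟨Finset.mem_image_of_mem _ hb,
        hb, iter_mem β.dom ψ hψB K b hb, (hKψ b hb).symm⟩, ?_⟩
      rintro y ⟨hyS, -, -, hy⟩
      rw [← hfixS y hyS, ← hy]
    · intro t ht t' ht' a a' hat hat'
      have h1 : ψ^[K] a = t := hat.2.2.trans (hfixS t ht)
      have h2 : ψ^[K] a' = t' := hat'.2.2.trans (hfixS t' ht')
      rw [← h1, ← h2]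
      exact hctrKψ a hat.1 a' hat'.1
  -- the correspondence f : T → S
  have hcommf : ∀ (k : ℕ) (x : ℕ), f (φ^[k] x) = ψ^[k] (f x) := fun k x => comm_iter f g k x
  have hcommg : ∀ (k : ℕ) (x : ℕ), g (ψ^[k] x) = φ^[k] (g x) := fun k x => comm_iter g f k x
  have hfT : ∀ t ∈ T, f t ∈ S := by
    intro t ht
    obtain ⟨a, ha, rfl⟩ := Finset.mem_image.mp ht
    rw [hcommf K a]
    exact Finset.mem_image_of_mem _ (hfdom a ha).2
  have hgS : ∀ u ∈ S, g u ∈ T := by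
    intro u hu
    obtain ⟨b, hb, rfl⟩ := Finset.mem_image.mp hu
    rw [hcommg K b]
    exact Finset.mem_image_of_mem _ (hgdom b hb).2
  obtain ⟨K', hK'⟩ : ∃ K', K = K' + 1 := ⟨K - 1, by omega⟩
  have hiso : ∀ t ∈ T, ∀ t' ∈ T, |(f t : ℤ) - (f t' : ℤ)| = |(t : ℤ) - (t' : ℤ)| := by
    intro t ht t' ht'
    refine le_antisymm (hfc t (hTA ht) t' (hTA ht')) ?_
    have hd : ∀ x, φ^[K] x = g (ψ^[K'] (f x)) := by
      intro x
      rw [hK']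
      exact iter_decomp f g K' x
    calc |(t : ℤ) - (t' : ℤ)| = |(φ^[K] t : ℤ) - (φ^[K] t' : ℤ)| := by
          rw [hfixT t ht, hfixT t' ht']
      _ = |(g (ψ^[K'] (f t)) : ℤ) - (g (ψ^[K'] (f t')) : ℤ)| := by rw [hd, hd]
      _ ≤ |(ψ^[K'] (f t) : ℤ) - (ψ^[K'] (f t') : ℤ)| := by
          apply hgc
          · exact iter_mem β.dom ψ hψB K' _ (hfdom t (hTA ht)).2
          · exact iter_mem β.dom ψ hψB K' _ (hfdom t' (hTA ht')).2
      _ ≤ |(f t : ℤ) - (f t' : ℤ)| :=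
          iter_contr β.dom ψ hψB hψc K' _ (hfdom t (hTA ht)).2 _ (hfdom t' (hTA ht')).2
  have hfinj : Set.InjOn f T := by
    intro t ht t' ht' hff
    have := hiso t ht t' ht'
    rw [hff] at this
    simp only [sub_self, abs_zero] at this
    have := this.symm
    rw [abs_eq_zero, sub_eq_zero] at this
    exact_mod_cast this
  have hginj : Set.InjOn g S := by
    intro u hu u' hu' hgg
    have hd : ∀ x, ψ^[K] x = f (φ^[K'] (g x)) := by
      intro x
      rw [hK']
      exact iter_decomp g f K' x
    have h1 : u = f (φ^[K'] (g u)) := by rw [← hd, hfixS u hu]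
    have h2 : u' = f (φ^[K'] (g u')) := by rw [← hd, hfixS u' hu']
    rw [h1, h2, hgg]
  have hcard1 : S.card ≤ T.card := by
    have h1 : S.image g ⊆ T := by
      intro x hx
      obtain ⟨u, hu, rfl⟩ := Finset.mem_image.mp hx
      exact hgS u hu
    calc S.card = (S.image g).card := (Finset.card_image_of_injOn hginj).symm
      _ ≤ T.card := Finset.card_le_card h1
  have hTfS : T.image f ⊆ S := by
    intro x hx
    obtain ⟨t, ht, rfl⟩ := Finset.mem_image.mp hx
    exact hfT t ht
  have hSeq : S = T.image f := by
    refine (Finset.eq_of_subset_of_card_le hTfS ?_).symm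
    rw [Finset.card_image_of_injOn hfinj]
    exact hcard1
  obtain ⟨e, hcase⟩ := exists_affine T f hiso
  refine ⟨r, s, T, S, e, hrref, hsref, ?_⟩
  rcases hcase with hl | hr'
  · refine Or.inl ⟨fun t ht => ⟨f t, hfT t ht, hl t ht, hfval t (hTA ht)⟩, ?_⟩
    intro u hu
    rw [hSeq] at hu
    obtain ⟨t, ht, rfl⟩ := Finset.mem_image.mp hu
    exact ⟨t, ht, hl t ht⟩
  · refine Or.inr ⟨fun t ht => ⟨f t, hfT t ht, hr' t ht, hfval t (hTA ht)⟩, ?_⟩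
    intro u hu
    rw [hSeq] at hu
    obtain ⟨t, ht, rfl⟩ := Finset.mem_image.mp hu
    exact ⟨t, ht, hr' t ht⟩

def idOn {n : ℕ} (β : PT n) : PT n where
  dom := β.dom
  toFun := fun x => if x ∈ β.dom then x else 0
  dom_subset := β.dom_subset
  maps_to := by
    intro x hx
    simp only [if_pos hx]
    exact β.dom_subset hx
  zero_outside := by intro x hx; simp only [if_neg hx]

lemma idOn_contr {n : ℕ} (β : PT n) : PT.IsContraction (idOn β) := by
  intro x hx y hy
  have hx' : x ∈ β.dom := hx
  have hy' : y ∈ β.dom := hy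
  show |(↑(if x ∈ β.dom then x else 0) : ℤ) - ↑(if y ∈ β.dom then y else 0)| ≤ _
  rw [if_pos hx', if_pos hy']

lemma idOn_comp {n : ℕ} (β : PT n) : β = (idOn β).comp β := by
  refine PT.ext' ?_ ?_
  · show β.dom = (idOn β).dom.filter _
    ext x
    simp only [Finset.mem_filter]
    constructor
    · intro hx
      refine ⟨hx, ?_⟩
      show (if x ∈ β.dom then x else 0) ∈ β.dom
      rw [if_pos hx]
      exact hx
    · exact fun h => h.1
  · intro x
    show β.toFun x =
      if (x ∈ (idOn β).dom ∧ (idOn β).toFun x ∈ β.dom) then β.toFun ((idOn β).toFun x) else 0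
    by_cases hx : x ∈ β.dom
    · have hid : (idOn β).toFun x = x := by
        show (if x ∈ β.dom then x else 0) = x
        rw [if_pos hx]
      rw [if_pos ⟨hx, by rw [hid]; exact hx⟩, hid]
    · rw [β.zero_outside x hx, if_neg]
      rintro ⟨h1, -⟩
      exact hx h1

/-- Characterization of Green's `ℒ`-relation on `CP n`. -/
theorem greenL_iff (n : ℕ) (hn : 1 ≤ n) (α β : PT n)
    (hα : PT.IsContraction α) (hβ : PT.IsContraction β) :
    GreenL α β ↔
      ∃ (r s : ℕ → ℕ → Prop) (T S : Finset ℕ) (e : ℤ),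
        AdmissibleRefinement α r T ∧ AdmissibleRefinement β s S ∧
        (((∀ t ∈ T, ∃ u ∈ S, (u : ℤ) = (t : ℤ) + e ∧ α.toFun t = β.toFun u) ∧
          (∀ u ∈ S, ∃ t ∈ T, (u : ℤ) = (t : ℤ) + e)) ∨
         ((∀ t ∈ T, ∃ u ∈ S, (u : ℤ) = e - (t : ℤ) ∧ α.toFun t = β.toFun u) ∧
          (∀ u ∈ S, ∃ t ∈ T, (u : ℤ) = e - (t : ℤ)))) := by
  classical
  constructor
  · rintro ⟨h1, h2⟩
    have hγ₁ : ∃ γ₁ : PT n, PT.IsContraction γ₁ ∧ α = γ₁.comp β := by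
      rcases h1 with heq | h
      · exact ⟨idOn β, idOn_contr β, by rw [heq]; exact idOn_comp β⟩
      · exact h
    have hγ₂ : ∃ γ₂ : PT n, PT.IsContraction γ₂ ∧ β = γ₂.comp α := by
      rcases h2 with heq | h
      · exact ⟨idOn α, idOn_contr α, by rw [heq]; exact idOn_comp α⟩
      · exact h
    obtain ⟨γ₁, hc₁, hαc⟩ := hγ₁
    obtain ⟨γ₂, hc₂, hβc⟩ := hγ₂
    exact forward_main α β γ₁ γ₂ hαc hβc hc₁ hc₂
  · rintro ⟨r, s, T, S, e, hr, hs, hcase⟩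
    have hr6 : T ⊆ α.dom := hr.2.2.2.2.2.1
    have hs6 : S ⊆ β.dom := hs.2.2.2.2.2.1
    rcases hcase with ⟨hTS, hST⟩ | ⟨hTS, hST⟩
    · -- translation case
      have huex : ∀ t : ℕ, ∃ u, t ∈ T →
          (u ∈ S ∧ (u : ℤ) = (t : ℤ) + e ∧ α.toFun t = β.toFun u) := by
        intro t
        by_cases ht : t ∈ T
        · obtain ⟨u, hu, h1, h2⟩ := hTS t ht
          exact ⟨u, fun _ => ⟨hu, h1, h2⟩⟩
        · exact ⟨0, fun h => absurd h ht⟩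
      choose uof huof using huex
      have htex : ∀ u : ℕ, ∃ t, u ∈ S → (t ∈ T ∧ (u : ℤ) = (t : ℤ) + e) := by
        intro u
        by_cases hu : u ∈ S
        · obtain ⟨t, ht, h1⟩ := hST u hu
          exact ⟨t, fun _ => ⟨ht, h1⟩⟩
        · exact ⟨0, fun h => absurd h hu⟩
      choose tof htof using htex
      have hfac1 : ∃ γ : PT n, PT.IsContraction γ ∧ α = γ.comp β := by
        refine factor_exists α β r T hr uof
          (fun t ht => hs6 ((huof t ht).1))
          (fun t ht => (huof t ht).2.2) ?_
        intro t ht t' ht'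
        have h1 : (uof t : ℤ) - (uof t' : ℤ) = (t : ℤ) - (t' : ℤ) := by
          rw [(huof t ht).2.1, (huof t' ht').2.1]; ring
        rw [h1]
      have hfac2 : ∃ γ : PT n, PT.IsContraction γ ∧ β = γ.comp α := by
        have hval : ∀ u ∈ S, β.toFun u = α.toFun (tof u) := by
          intro u hu
          obtain ⟨htT, h1⟩ := htof u hu
          obtain ⟨hu'S, h1', h2'⟩ := huof (tof u) htT
          have : (uof (tof u) : ℤ) = (u : ℤ) := by rw [h1', h1]
          have heq : uof (tof u) = u := by exact_mod_cast this
          rw [heq] at h2'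
          exact h2'.symm
        refine factor_exists β α s S hs tof
          (fun u hu => hr6 ((htof u hu).1)) hval ?_
        intro u hu u' hu'
        have h1 : (tof u : ℤ) - (tof u' : ℤ) = (u : ℤ) - (u' : ℤ) := by
          have e1 := (htof u hu).2
          have e2 := (htof u' hu').2
          omega
        rw [h1]
      obtain ⟨γ₁, hc₁, he₁⟩ := hfac1
      obtain ⟨γ₂, hc₂, he₂⟩ := hfac2
      exact ⟨Or.inr ⟨γ₁, hc₁, he₁⟩, Or.inr ⟨γ₂, hc₂, he₂⟩⟩
    · -- reflection case
      have huex : ∀ t : ℕ, ∃ u, t ∈ T →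
          (u ∈ S ∧ (u : ℤ) = e - (t : ℤ) ∧ α.toFun t = β.toFun u) := by
        intro t
        by_cases ht : t ∈ T
        · obtain ⟨u, hu, h1, h2⟩ := hTS t ht
          exact ⟨u, fun _ => ⟨hu, h1, h2⟩⟩
        · exact ⟨0, fun h => absurd h ht⟩
      choose uof huof using huex
      have htex : ∀ u : ℕ, ∃ t, u ∈ S → (t ∈ T ∧ (u : ℤ) = e - (t : ℤ)) := by
        intro u
        by_cases hu : u ∈ S
        · obtain ⟨t, ht, h1⟩ := hST u hu
          exact ⟨t, fun _ => ⟨ht, h1⟩⟩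
        · exact ⟨0, fun h => absurd h hu⟩
      choose tof htof using htex
      have hfac1 : ∃ γ : PT n, PT.IsContraction γ ∧ α = γ.comp β := by
        refine factor_exists α β r T hr uof
          (fun t ht => hs6 ((huof t ht).1))
          (fun t ht => (huof t ht).2.2) ?_
        intro t ht t' ht'
        have h1 : (uof t : ℤ) - (uof t' : ℤ) = (t' : ℤ) - (t : ℤ) := by
          rw [(huof t ht).2.1, (huof t' ht').2.1]; ring
        rw [h1, abs_sub_comm]
      have hfac2 : ∃ γ : PT n, PT.IsContraction γ ∧ β = γ.comp α := by
        have hval : ∀ u ∈ S, β.toFun u = α.toFun (tof u) := by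
          intro u hu
          obtain ⟨htT, h1⟩ := htof u hu
          obtain ⟨hu'S, h1', h2'⟩ := huof (tof u) htT
          have : (uof (tof u) : ℤ) = (u : ℤ) := by rw [h1', ← h1]
          have heq : uof (tof u) = u := by exact_mod_cast this
          rw [heq] at h2'
          exact h2'.symm
        refine factor_exists β α s S hs tof
          (fun u hu => hr6 ((htof u hu).1)) hval ?_
        intro u hu u' hu'
        have h1 : (tof u : ℤ) - (tof u' : ℤ) = (u' : ℤ) - (u : ℤ) := by
          have e1 := (htof u hu).2
          have e2 := (htof u' hu').2
          omega
        rw [h1, abs_sub_comm]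
      obtain ⟨γ₁, hc₁, he₁⟩ := hfac1
      obtain ⟨γ₂, hc₂, he₂⟩ := hfac2
      exact ⟨Or.inr ⟨γ₁, hc₁, he₁⟩, Or.inr ⟨γ₂, hc₂, he₂⟩⟩
end

section
/- Let n ≥ 1 and let α, β ∈ CP_n both be regular in CP_n (each x ∈ {α, β} satisfies x = xγx for some γ ∈ CP_n). Then α 𝒟 β in CP_n if and only if there exists an integer e such that im α = {y + e : y ∈ im β} or im α = {e − y : y ∈ im β}; that is, im α is obtained from im β by a translation or a reflection of the integers. -/
/-- Green's `ℛ`-relation in the semigroup `CP n` of partial contractions: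
`α ℛ β` iff `α (CP n)¹ = β (CP n)¹`. -/
def GreenR {n : ℕ} (α β : PT n) : Prop :=
  (α = β ∨ ∃ γ : PT n, PT.IsContraction γ ∧ α = β.comp γ) ∧
  (β = α ∨ ∃ γ : PT n, PT.IsContraction γ ∧ β = α.comp γ)

namespace PT

variable {n : ℕ}

lemma ext'_s6 {α β : PT n} (hd : α.dom = β.dom) (hf : ∀ x, α.toFun x = β.toFun x) : α = β := by
  cases α; cases β
  simp only [mk.injEq]
  exact ⟨hd, funext hf⟩

lemma mem_im {α : PT n} {y : ℕ} : y ∈ α.im ↔ ∃ x ∈ α.dom, α.toFun x = y := by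
  simp [im]

lemma toFun_mem_im {α : PT n} {x : ℕ} (hx : x ∈ α.dom) : α.toFun x ∈ α.im :=
  mem_im.mpr ⟨x, hx, rfl⟩

lemma im_subset_Icc (α : PT n) : α.im ⊆ Finset.Icc 1 n := by
  intro y hy
  obtain ⟨x, hx, rfl⟩ := mem_im.mp hy
  exact α.maps_to x hx

lemma mem_comp_dom {α β : PT n} {x : ℕ} :
    x ∈ (α.comp β).dom ↔ x ∈ α.dom ∧ α.toFun x ∈ β.dom := Finset.mem_filter

lemma comp_toFun_of_mem {α β : PT n} {x : ℕ} (h1 : x ∈ α.dom) (h2 : α.toFun x ∈ β.dom) :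
    (α.comp β).toFun x = β.toFun (α.toFun x) := if_pos ⟨h1, h2⟩

lemma comp_contraction {α β : PT n} (hα : IsContraction α) (hβ : IsContraction β) :
    IsContraction (α.comp β) := by
  intro x hx y hy
  rw [mem_comp_dom] at hx hy
  rw [comp_toFun_of_mem hx.1 hx.2, comp_toFun_of_mem hy.1 hy.2]
  exact le_trans (hβ _ hx.2 _ hy.2) (hα _ hx.1 _ hy.1)

lemma im_comp_subset (α β : PT n) : (α.comp β).im ⊆ β.im := by
  intro y hy
  obtain ⟨x, hx, rfl⟩ := mem_im.mp hy
  rw [mem_comp_dom] at hx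
  rw [comp_toFun_of_mem hx.1 hx.2]
  exact toFun_mem_im hx.2

/-- From a regularity witness, extract the "section" property. -/
lemma section_of_regular {α γ : PT n} (h : α = (α.comp γ).comp α) :
    ∀ y ∈ α.im, y ∈ γ.dom ∧ γ.toFun y ∈ α.dom ∧ α.toFun (γ.toFun y) = y := by
  intro y hy
  obtain ⟨x, hx, rfl⟩ := mem_im.mp hy
  have hx' : x ∈ ((α.comp γ).comp α).dom := by rw [← h]; exact hx
  rw [mem_comp_dom, mem_comp_dom] at hx'
  obtain ⟨⟨hx1, hx2⟩, hx3⟩ := hx'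
  rw [comp_toFun_of_mem hx1 hx2] at hx3
  refine ⟨hx2, hx3, ?_⟩
  have h0 : (α.comp γ).toFun x = γ.toFun (α.toFun x) := comp_toFun_of_mem hx1 hx2
  have h1 : ((α.comp γ).comp α).toFun x = α.toFun ((α.comp γ).toFun x) :=
    comp_toFun_of_mem (mem_comp_dom.mpr ⟨hx1, hx2⟩) (h0 ▸ hx3)
  have h2 : α.toFun x = ((α.comp γ).comp α).toFun x := by conv_lhs => rw [h]
  rw [h1, h0] at h2
  exact h2.symm

/-- If `s` acts as a section of `c` on all of `im α`, then `α = (α ∘ s) ∘ c`. -/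
lemma eq_comp_of_section {α c s : PT n}
    (hs : ∀ y ∈ α.im, y ∈ s.dom ∧ s.toFun y ∈ c.dom ∧ c.toFun (s.toFun y) = y) :
    α = (α.comp s).comp c := by
  apply ext'_s6
  · ext x
    rw [mem_comp_dom, mem_comp_dom]
    constructor
    · intro hx
      obtain ⟨hd, hc, _⟩ := hs _ (toFun_mem_im hx)
      refine ⟨⟨hx, hd⟩, ?_⟩
      rw [comp_toFun_of_mem hx hd]; exact hc
    · rintro ⟨⟨h1, _⟩, _⟩; exact h1
  · intro x
    by_cases hx : x ∈ α.dom
    · obtain ⟨hd, hc, hv⟩ := hs _ (toFun_mem_im hx)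
      have h0 : (α.comp s).toFun x = s.toFun (α.toFun x) := comp_toFun_of_mem hx hd
      rw [comp_toFun_of_mem (mem_comp_dom.mpr ⟨hx, hd⟩) (h0 ▸ hc), h0, hv]
    · rw [α.zero_outside x hx, ((α.comp s).comp c).zero_outside x]
      rw [mem_comp_dom, mem_comp_dom]
      rintro ⟨⟨h1, _⟩, _⟩; exact hx h1

end PT

lemma isom_classify (S : Finset ℤ) (F : ℤ → ℤ)
    (h : ∀ a ∈ S, ∀ b ∈ S, |F a - F b| = |a - b|) :
    ∃ e : ℤ, S.image F = S.image (fun y => y + e) ∨ S.image F = S.image (fun y => e - y) := by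
  rcases S.eq_empty_or_nonempty with rfl | hne
  · exact ⟨0, Or.inl (by simp)⟩
  set a := S.min' hne with ha
  have haS : a ∈ S := S.min'_mem hne
  have hsign : ∀ x ∈ S, F x = F a + (x - a) ∨ F x = F a - (x - a) := by
    intro x hx
    have h1 := h x hx a haS
    have hle := S.min'_le x hx
    rw [abs_of_nonneg (by omega : (0:ℤ) ≤ x - a)] at h1
    rcases (abs_eq (by omega : (0:ℤ) ≤ x - a)).mp h1 with h3 | h3
    · left; omega
    · right; omega
  by_cases hall : ∀ x ∈ S, F x = F a + (x - a)
  · refine ⟨F a - a, Or.inl ?_⟩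
    apply Finset.image_congr
    intro x hx
    have hx' : x ∈ S := hx
    show F x = x + (F a - a)
    have := hall x hx'
    omega
  · push_neg at hall
    obtain ⟨b, hbS, hb⟩ := hall
    have hbv : F b = F a - (b - a) := (hsign b hbS).resolve_left hb
    have hba : a < b := by
      have := S.min'_le b hbS
      rcases lt_or_eq_of_le this with h' | h'
      · exact h'
      · exfalso; apply hb; omega
    refine ⟨F a + a, Or.inr ?_⟩
    apply Finset.image_congr
    intro x hx
    have hx' : x ∈ S := hx
    show F x = F a + a - x
    rcases hsign x hx' with h3 | h3
    · by_cases hxa : x = a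
      · subst hxa; omega
      have hxa' : a < x := lt_of_le_of_ne (S.min'_le x hx') (Ne.symm hxa)
      have h4 := h x hx' b hbS
      rw [h3, hbv] at h4
      rcases abs_cases ((x:ℤ) - b) with ⟨h5, h6⟩ | ⟨h5, h6⟩ <;>
        rcases abs_cases (F a + (x - a) - (F a - (b - a))) with ⟨h7, h8⟩ | ⟨h7, h8⟩ <;> omega
    · omega

namespace PT
variable {n : ℕ}

lemma im_eq_of_greenL {α c : PT n} (hL : GreenL α c) : α.im = c.im := by
  obtain ⟨h1, h2⟩ := hL
  rcases h1 with rfl | ⟨γ, _, hγ⟩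
  · rfl
  rcases h2 with rfl | ⟨δ, _, hδ⟩
  · rfl
  apply Finset.Subset.antisymm
  · rw [hγ]; exact im_comp_subset γ c
  · rw [hδ]; exact im_comp_subset δ α

/-- From `c ℛ β` (nontrivially) : `dom c = dom β` and `c` is "isometric to" `β`. -/
lemma key_of_greenR {c β g g' : PT n} (hgc : IsContraction g) (hg'c : IsContraction g')
    (hcg : c = β.comp g) (hbg : β = c.comp g') :
    c.dom = β.dom ∧
    ∀ x ∈ β.dom, ∀ x' ∈ β.dom,
      |(c.toFun x : ℤ) - (c.toFun x' : ℤ)| = |(β.toFun x : ℤ) - (β.toFun x' : ℤ)| := by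
  have h2 : β.dom ⊆ c.dom := by
    intro x hx
    rw [hbg] at hx
    exact (mem_comp_dom.mp hx).1
  have hval_c : ∀ x ∈ β.dom, β.toFun x ∈ g.dom ∧ c.toFun x = g.toFun (β.toFun x) := by
    intro x hx
    have hx' : x ∈ c.dom := h2 hx
    rw [hcg] at hx' ⊢
    obtain ⟨_, hgd⟩ := mem_comp_dom.mp hx'
    exact ⟨hgd, comp_toFun_of_mem hx hgd⟩
  have hval_b : ∀ x ∈ β.dom, c.toFun x ∈ g'.dom ∧ β.toFun x = g'.toFun (c.toFun x) := by
    intro x hx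
    have hx' : x ∈ β.dom := hx
    rw [hbg] at hx'
    obtain ⟨hcd, hgd⟩ := mem_comp_dom.mp hx'
    constructor
    · exact hgd
    · conv_lhs => rw [hbg]
      exact comp_toFun_of_mem hcd hgd
  constructor
  · apply Finset.Subset.antisymm _ h2
    intro x hx
    rw [hcg] at hx
    exact (mem_comp_dom.mp hx).1
  · intro x hx x' hx'
    obtain ⟨hm1, he1⟩ := hval_c x hx
    obtain ⟨hm1', he1'⟩ := hval_c x' hx'
    obtain ⟨hm2, he2⟩ := hval_b x hx
    obtain ⟨hm2', he2'⟩ := hval_b x' hx'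
    apply le_antisymm
    · rw [he1, he1']
      exact hgc _ hm1 _ hm1'
    · rw [he2, he2']
      exact hg'c _ hm2 _ hm2'

lemma forward_dir {α β c : PT n} (hβ : IsContraction β)
    (sβ : PT n)
    (hsβ : ∀ y ∈ β.im, y ∈ sβ.dom ∧ sβ.toFun y ∈ β.dom ∧ β.toFun (sβ.toFun y) = y)
    (hL : GreenL α c) (hR : GreenR c β) :
    ∃ e : ℤ,
      α.im.image (fun y : ℕ => (y : ℤ)) = β.im.image (fun y : ℕ => (y : ℤ) + e) ∨
      α.im.image (fun y : ℕ => (y : ℤ)) = β.im.image (fun y : ℕ => e - (y : ℤ)) := by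
  have himac : α.im = c.im := im_eq_of_greenL hL
  obtain ⟨hR1, hR2⟩ := hR
  have hcb : c = β → ∃ e : ℤ,
      α.im.image (fun y : ℕ => (y : ℤ)) = β.im.image (fun y : ℕ => (y : ℤ) + e) ∨
      α.im.image (fun y : ℕ => (y : ℤ)) = β.im.image (fun y : ℕ => e - (y : ℤ)) := by
    rintro rfl
    refine ⟨0, Or.inl ?_⟩
    rw [himac]
    apply Finset.image_congr
    intro y _
    simp
  rcases hR1 with h | ⟨g, hgc, hcg⟩
  · exact hcb h
  rcases hR2 with h | ⟨g', hg'c, hbg⟩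
  · exact hcb h.symm
  obtain ⟨hdom, hkey⟩ := key_of_greenR hgc hg'c hcg hbg
  -- the induced isometry
  set S : Finset ℤ := β.im.image (fun y : ℕ => (y : ℤ)) with hS
  set F : ℤ → ℤ := fun z => (c.toFun (sβ.toFun z.toNat) : ℤ) with hF
  have hFval : ∀ y ∈ β.im, F (y : ℤ) = (c.toFun (sβ.toFun y) : ℤ) := by
    intro y _
    simp [hF]
  have hIso : ∀ a ∈ S, ∀ b ∈ S, |F a - F b| = |a - b| := by
    intro a haS b hbS
    obtain ⟨a₀, ha₀, rfl⟩ := Finset.mem_image.mp haS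
    obtain ⟨b₀, hb₀, rfl⟩ := Finset.mem_image.mp hbS
    obtain ⟨_, hda, hva⟩ := hsβ a₀ ha₀
    obtain ⟨_, hdb, hvb⟩ := hsβ b₀ hb₀
    rw [hFval a₀ ha₀, hFval b₀ hb₀, hkey _ hda _ hdb, hva, hvb]
  have himg : S.image F = c.im.image (fun y : ℕ => (y : ℤ)) := by
    ext z
    rw [Finset.mem_image, Finset.mem_image]
    constructor
    · rintro ⟨b, hbS, rfl⟩
      obtain ⟨b₀, hb₀, rfl⟩ := Finset.mem_image.mp hbS
      obtain ⟨_, hdb, _⟩ := hsβ b₀ hb₀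
      refine ⟨c.toFun (sβ.toFun b₀), ?_, (hFval b₀ hb₀)⟩
      exact toFun_mem_im (hdom ▸ hdb)
    · rintro ⟨y, hy, rfl⟩
      obtain ⟨x, hx, rfl⟩ := mem_im.mp hy
      have hxβ : x ∈ β.dom := hdom ▸ hx
      have hb : β.toFun x ∈ β.im := toFun_mem_im hxβ
      obtain ⟨_, hdb, hvb⟩ := hsβ _ hb
      refine ⟨((β.toFun x : ℕ) : ℤ), Finset.mem_image_of_mem _ hb, ?_⟩
      rw [hFval _ hb]
      have := hkey _ hdb _ hxβ
      rw [hvb] at this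
      simp only [sub_self, abs_zero, abs_eq_zero] at this
      omega
  obtain ⟨e, he⟩ := isom_classify S F hIso
  rw [himg] at he
  rw [himac]
  rcases he with he | he
  · exact ⟨e, Or.inl (by rw [he, hS, Finset.image_image]; rfl)⟩
  · exact ⟨e, Or.inr (by rw [he, hS, Finset.image_image]; rfl)⟩

end PT

namespace PT
variable {n : ℕ}

lemma greenL_of {α c : PT n} (hα : IsContraction α) (hc : IsContraction c)
    {s₁ s₂ : PT n} (h1c : IsContraction s₁)
    (h1 : ∀ y ∈ α.im, y ∈ s₁.dom ∧ s₁.toFun y ∈ c.dom ∧ c.toFun (s₁.toFun y) = y)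
    (h2c : IsContraction s₂)
    (h2 : ∀ y ∈ c.im, y ∈ s₂.dom ∧ s₂.toFun y ∈ α.dom ∧ α.toFun (s₂.toFun y) = y) :
    GreenL α c :=
  ⟨Or.inr ⟨α.comp s₁, comp_contraction hα h1c, eq_comp_of_section h1⟩,
   Or.inr ⟨c.comp s₂, comp_contraction hc h2c, eq_comp_of_section h2⟩⟩

/-- Build a partial transformation from a domain and a function. -/
def mk' (D : Finset ℕ) (G : ℕ → ℕ) (hD : D ⊆ Finset.Icc 1 n)
    (hG : ∀ x ∈ D, G x ∈ Finset.Icc 1 n) : PT n :=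
  ⟨D, fun x => if x ∈ D then G x else 0, hD,
   by intro x hx; simpa [if_pos hx] using hG x hx,
   by intro x hx; simp [if_neg hx]⟩

@[simp] lemma mk'_dom (D : Finset ℕ) (G : ℕ → ℕ) (hD) (hG) :
    (mk' (n := n) D G hD hG).dom = D := rfl

lemma mk'_toFun_of_mem {D : Finset ℕ} {G : ℕ → ℕ} {hD} {hG} {x : ℕ} (hx : x ∈ D) :
    (mk' (n := n) D G hD hG).toFun x = G x := if_pos hx

lemma backward_dir {α β : PT n} (hα : IsContraction α) (hβ : IsContraction β)
    {sα : PT n} (hsαc : IsContraction sα)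
    (hsα : ∀ y ∈ α.im, y ∈ sα.dom ∧ sα.toFun y ∈ α.dom ∧ α.toFun (sα.toFun y) = y)
    {sβ : PT n} (hsβc : IsContraction sβ)
    (hsβ : ∀ y ∈ β.im, y ∈ sβ.dom ∧ sβ.toFun y ∈ β.dom ∧ β.toFun (sβ.toFun y) = y)
    (g g' : ℤ → ℤ)
    (hgg' : ∀ z, g' (g z) = z) (hg'g : ∀ z, g (g' z) = z)
    (hiso : ∀ a b, |g a - g b| = |a - b|)
    (hmg : ∀ y ∈ β.im, ∃ z ∈ α.im, (z : ℤ) = g (y : ℤ))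
    (hmg' : ∀ z ∈ α.im, ∃ y ∈ β.im, (y : ℤ) = g' (z : ℤ)) :
    ∃ c : PT n, IsContraction c ∧ GreenL α c ∧ GreenR c β := by
  have hiso' : ∀ a b, |g' a - g' b| = |a - b| := by
    intro a b
    have := hiso (g' a) (g' b)
    rw [hg'g, hg'g] at this
    exact this.symm
  set G : ℕ → ℕ := fun y => (g (y : ℤ)).toNat with hGdef
  set G' : ℕ → ℕ := fun z => (g' (z : ℤ)).toNat with hG'def
  have hG : ∀ y ∈ β.im, G y ∈ α.im ∧ ((G y : ℕ) : ℤ) = g (y : ℤ) := by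
    intro y hy
    obtain ⟨z, hz, hze⟩ := hmg y hy
    have : G y = z := by simp [hGdef, ← hze]
    rw [this]
    exact ⟨hz, hze⟩
  have hG' : ∀ z ∈ α.im, G' z ∈ β.im ∧ ((G' z : ℕ) : ℤ) = g' (z : ℤ) := by
    intro z hz
    obtain ⟨y, hy, hye⟩ := hmg' z hz
    have : G' z = y := by simp [hG'def, ← hye]
    rw [this]
    exact ⟨hy, hye⟩
  set f : PT n := mk' β.im G (im_subset_Icc β)
    (fun y hy => im_subset_Icc α ((hG y hy).1)) with hfdef
  set f' : PT n := mk' α.im G' (im_subset_Icc α)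
    (fun z hz => im_subset_Icc β ((hG' z hz).1)) with hf'def
  have hfc : IsContraction f := by
    intro x hx y hy
    rw [mk'_dom] at hx hy
    rw [hfdef, mk'_toFun_of_mem hx, mk'_toFun_of_mem hy, (hG x hx).2, (hG y hy).2, hiso]
  have hf'c : IsContraction f' := by
    intro x hx y hy
    rw [mk'_dom] at hx hy
    rw [hf'def, mk'_toFun_of_mem hx, mk'_toFun_of_mem hy, (hG' x hx).2, (hG' y hy).2, hiso']
  set c : PT n := β.comp f with hcdef
  have hc : IsContraction c := comp_contraction hβ hfc
  have hmemc : ∀ x ∈ β.dom, x ∈ c.dom := by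
    intro x hx
    rw [hcdef, mem_comp_dom]
    exact ⟨hx, toFun_mem_im hx⟩
  have hcval : ∀ x ∈ β.dom, c.toFun x = G (β.toFun x) := by
    intro x hx
    rw [hcdef, comp_toFun_of_mem hx (toFun_mem_im hx), hfdef,
      mk'_toFun_of_mem (toFun_mem_im hx)]
  have hcim1 : ∀ x ∈ β.dom, c.toFun x ∈ α.im := by
    intro x hx
    rw [hcval x hx]
    exact (hG _ (toFun_mem_im hx)).1
  have hcim_sub : c.im ⊆ α.im := by
    intro y hy
    obtain ⟨x, hx, rfl⟩ := mem_im.mp hy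
    rw [hcdef, mem_comp_dom] at hx
    exact hcim1 x hx.1
  have hG'G : ∀ y ∈ β.im, G' (G y) = y := by
    intro y hy
    have e1 := (hG y hy).2
    have e2 := (hG' _ (hG y hy).1).2
    rw [e1, hgg'] at e2
    exact_mod_cast e2
  have hGG' : ∀ z ∈ α.im, G (G' z) = z := by
    intro z hz
    have e1 := (hG' z hz).2
    have e2 := (hG _ (hG' z hz).1).2
    rw [e1, hg'g] at e2
    exact_mod_cast e2
  refine ⟨c, hc, ?_, ?_⟩
  · -- GreenL α c
    refine greenL_of hα hc (s₁ := f'.comp sβ) (s₂ := sα)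
      (comp_contraction hf'c hsβc) ?_ hsαc (fun y hy => hsα y (hcim_sub hy))
    intro y hy
    have hG'y : G' y ∈ β.im := (hG' y hy).1
    have hf'dom : y ∈ f'.dom := by rw [hf'def, mk'_dom]; exact hy
    have hf'val : f'.toFun y = G' y := by rw [hf'def]; exact mk'_toFun_of_mem hy
    obtain ⟨hd1, hd2, hv⟩ := hsβ _ hG'y
    refine ⟨?_, ?_, ?_⟩
    · rw [mem_comp_dom, hf'val]
      exact ⟨hf'dom, hd1⟩
    · rw [comp_toFun_of_mem hf'dom (hf'val ▸ hd1), hf'val]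
      exact hmemc _ hd2
    · rw [comp_toFun_of_mem hf'dom (hf'val ▸ hd1), hf'val, hcval _ hd2, hv]
      exact hGG' y hy
  · -- GreenR c β
    constructor
    · exact Or.inr ⟨f, hfc, rfl⟩
    · refine Or.inr ⟨f', hf'c, ?_⟩
      apply ext'_s6
      · ext x
        rw [mem_comp_dom]
        constructor
        · intro hx
          exact ⟨hmemc x hx, hcim1 x hx⟩
        · rintro ⟨hx, _⟩
          rw [hcdef, mem_comp_dom] at hx
          exact hx.1
      · intro x
        by_cases hx : x ∈ β.dom
        · have h1 : c.toFun x ∈ f'.dom := by rw [hf'def, mk'_dom]; exact hcim1 x hx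
          rw [comp_toFun_of_mem (hmemc x hx) h1, hf'def,
            mk'_toFun_of_mem (hcim1 x hx), hcval x hx, hG'G _ (toFun_mem_im hx)]
        · rw [β.zero_outside x hx, (c.comp f').zero_outside x]
          rw [mem_comp_dom]
          rintro ⟨hx1, _⟩
          rw [hcdef, mem_comp_dom] at hx1
          exact hx (hx1.1)

end PT

/-- For regular elements of `CP n`: `α 𝒟 β` iff `im α` is a translate
or a reflection of `im β`. -/
theorem greenD_iff_of_regular (n : ℕ) (hn : 1 ≤ n) (α β : PT n)
    (hα : PT.IsContraction α) (hβ : PT.IsContraction β)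
    (hrα : ∃ γ : PT n, PT.IsContraction γ ∧ α = (α.comp γ).comp α)
    (hrβ : ∃ γ : PT n, PT.IsContraction γ ∧ β = (β.comp γ).comp β) :
    (∃ c : PT n, PT.IsContraction c ∧ GreenL α c ∧ GreenR c β) ↔
      ∃ e : ℤ,
        α.im.image (fun y : ℕ => (y : ℤ)) = β.im.image (fun y : ℕ => (y : ℤ) + e) ∨
        α.im.image (fun y : ℕ => (y : ℤ)) = β.im.image (fun y : ℕ => e - (y : ℤ)) := by
  obtain ⟨γa, hγac, heqa⟩ := hrα
  obtain ⟨γb, hγbc, heqb⟩ := hrβ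
  have hsα := PT.section_of_regular heqa
  have hsβ := PT.section_of_regular heqb
  constructor
  · rintro ⟨c, hc, hL, hR⟩
    exact PT.forward_dir hβ γb hsβ hL hR
  · rintro ⟨e, him | him⟩
    · refine PT.backward_dir hα hβ hγac hsα hγbc hsβ (fun z => z + e) (fun z => z - e)
        (by intro z; ring) (by intro z; ring) (by intro a b; congr 1; ring) ?_ ?_
      · intro y hy
        have h1 : ((y : ℕ) : ℤ) + e ∈ β.im.image (fun y : ℕ => (y : ℤ) + e) :=
          Finset.mem_image_of_mem _ hy
        rw [← him] at h1
        obtain ⟨z, hz, hze⟩ := Finset.mem_image.mp h1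
        exact ⟨z, hz, hze⟩
      · intro z hz
        have h1 : ((z : ℕ) : ℤ) ∈ α.im.image (fun y : ℕ => (y : ℤ)) :=
          Finset.mem_image_of_mem _ hz
        rw [him] at h1
        obtain ⟨y, hy, hye⟩ := Finset.mem_image.mp h1
        have hye' : ((y : ℕ) : ℤ) + e = ((z : ℕ) : ℤ) := hye
        refine ⟨y, hy, ?_⟩
        show ((y : ℕ) : ℤ) = ((z : ℕ) : ℤ) - e
        omega
    · refine PT.backward_dir hα hβ hγac hsα hγbc hsβ (fun z => e - z) (fun z => e - z)
        (by intro z; ring) (by intro z; ring)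
        (by intro a b
            have h0 : (e - a) - (e - b) = b - a := by ring
            rw [h0, abs_sub_comm]) ?_ ?_
      · intro y hy
        have h1 : e - ((y : ℕ) : ℤ) ∈ β.im.image (fun y : ℕ => e - (y : ℤ)) :=
          Finset.mem_image_of_mem _ hy
        rw [← him] at h1
        obtain ⟨z, hz, hze⟩ := Finset.mem_image.mp h1
        exact ⟨z, hz, hze⟩
      · intro z hz
        have h1 : ((z : ℕ) : ℤ) ∈ α.im.image (fun y : ℕ => (y : ℤ)) :=
          Finset.mem_image_of_mem _ hz
        rw [him] at h1
        obtain ⟨y, hy, hye⟩ := Finset.mem_image.mp h1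
        have hye' : e - ((y : ℕ) : ℤ) = ((z : ℕ) : ℤ) := hye
        refine ⟨y, hy, ?_⟩
        show ((y : ℕ) : ℤ) = e - ((z : ℕ) : ℤ)
        omega
end
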